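/- Let A be a Frobenius category and B ⊆ A an admissible subcategory. Then B, with the inherited exact structure, is itself a Frobenius category; moreover an object of B is projective in B if and only if it is projective when viewed as an object of A. -/

import Mathlib

universe v u

open CategoryTheory Limits

namespace Paper

variable {A : Type u} [Category.{v} A]

section Defs
variable [Preadditive A]

/-- `i` is a kernel of `d`. -/
def IsKer {X Y Z : A} (i : X ⟶ Y) (d : Y ⟶ Z) : Prop :=
  i ≫ d = 0 ∧ ∀ ⦃W : A⦄ (g : W ⟶ Y), g ≫ d = 0 → ∃! g' : W ⟶ X, g' ≫ i = g

/-- `d` is a cokernel of `i`. -/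
def IsCoker {X Y Z : A} (i : X ⟶ Y) (d : Y ⟶ Z) : Prop :=
  i ≫ d = 0 ∧ ∀ ⦃W : A⦄ (g : Y ⟶ W), i ≫ g = 0 → ∃! g' : Z ⟶ W, d ≫ g' = g

/-- An exact structure in the sense of Quillen (following Keller's axioms) on an
additive category `A`: a class of kernel-cokernel pairs (conflations), closed under
isomorphism, satisfying the axioms (Ex0), (Ex1), (Ex1op), (Ex2), (Ex2op). -/
structure ExactStructure (A : Type u) [Category.{v} A] [Preadditive A] where
  /-- the class of conflations `X ⟶ Y ⟶ Z` -/
  IsConflation : ∀ ⦃X Y Z : A⦄, (X ⟶ Y) → (Y ⟶ Z) → Prop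
  ker_of_conflation : ∀ ⦃X Y Z : A⦄ {i : X ⟶ Y} {d : Y ⟶ Z}, IsConflation i d → IsKer i d
  coker_of_conflation : ∀ ⦃X Y Z : A⦄ {i : X ⟶ Y} {d : Y ⟶ Z}, IsConflation i d → IsCoker i d
  iso_closed : ∀ ⦃X Y Z X' Y' Z' : A⦄ {i : X ⟶ Y} {d : Y ⟶ Z} {i' : X' ⟶ Y'} {d' : Y' ⟶ Z'}
    (eX : X ≅ X') (eY : Y ≅ Y') (eZ : Z ≅ Z'),
    i ≫ eY.hom = eX.hom ≫ i' → d ≫ eZ.hom = eY.hom ≫ d' →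
    IsConflation i d → IsConflation i' d'
  ex0 : ∀ ⦃Z : A⦄, IsZero Z → ∃ (X : A) (i : X ⟶ Z), IsConflation i (𝟙 Z)
  ex1 : ∀ ⦃Y Z W : A⦄ {d : Y ⟶ Z} {e : Z ⟶ W},
    (∃ (X : A) (i : X ⟶ Y), IsConflation i d) → (∃ (X : A) (i : X ⟶ Z), IsConflation i e) →
    ∃ (X : A) (i : X ⟶ Y), IsConflation i (d ≫ e)
  ex1op : ∀ ⦃X Y W : A⦄ {i : X ⟶ Y} {j : Y ⟶ W},
    (∃ (Z : A) (d : Y ⟶ Z), IsConflation i d) → (∃ (Z : A) (d : W ⟶ Z), IsConflation j d) →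
    ∃ (Z : A) (d : W ⟶ Z), IsConflation (i ≫ j) d
  ex2 : ∀ ⦃Y Z Z' : A⦄ (d : Y ⟶ Z) (f : Z' ⟶ Z),
    (∃ (X : A) (i : X ⟶ Y), IsConflation i d) →
    ∃ (Y' : A) (d' : Y' ⟶ Z') (f' : Y' ⟶ Y),
      IsPullback d' f' f d ∧ ∃ (X : A) (i : X ⟶ Y'), IsConflation i d'
  ex2op : ∀ ⦃X Y X' : A⦄ (i : X ⟶ Y) (f : X ⟶ X'),
    (∃ (Z : A) (d : Y ⟶ Z), IsConflation i d) →
    ∃ (Y' : A) (i' : X' ⟶ Y') (f' : Y ⟶ Y'),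
      IsPushout i f f' i' ∧ ∃ (Z : A) (d : Y' ⟶ Z), IsConflation i' d

namespace ExactStructure

variable (E : ExactStructure A)

/-- `d` is a deflation. -/
def IsDeflation {Y Z : A} (d : Y ⟶ Z) : Prop :=
  ∃ (X : A) (i : X ⟶ Y), E.IsConflation i d

/-- `i` is an inflation. -/
def IsInflation {X Y : A} (i : X ⟶ Y) : Prop :=
  ∃ (Z : A) (d : Y ⟶ Z), E.IsConflation i d

/-- projective object: every deflation onto it splits. -/
def Proj (P : A) : Prop :=
  ∀ ⦃Y : A⦄ (d : Y ⟶ P), E.IsDeflation d → ∃ s : P ⟶ Y, s ≫ d = 𝟙 P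

/-- injective object: every inflation out of it splits. -/
def Inj (I : A) : Prop :=
  ∀ ⦃Y : A⦄ (i : I ⟶ Y), E.IsInflation i → ∃ r : Y ⟶ I, i ≫ r = 𝟙 I

/-- enough projective objects -/
def EnoughProj : Prop :=
  ∀ X : A, ∃ (P : A) (d : P ⟶ X), E.Proj P ∧ E.IsDeflation d

/-- enough injective objects -/
def EnoughInj : Prop :=
  ∀ X : A, ∃ (I : A) (i : X ⟶ I), E.Inj I ∧ E.IsInflation i

/-- A Frobenius category: enough projectives, enough injectives, and the two classes coincide. -/
structure IsFrobenius : Prop where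
  enoughProj : E.EnoughProj
  enoughInj : E.EnoughInj
  proj_iff_inj : ∀ P : A, E.Proj P ↔ E.Inj P

end ExactStructure

end Defs

end Paper

/-! The pullbacks and pushouts demanded by (Ex1), (Ex2) and their duals can be formed in `A`:
they are extensions of objects of `B`, hence lie in `B`, and remain pullbacks and pushouts in the
full subcategory.

If `X ∈ B` is projective in `B`, its admissible deflation `Q ⟶ X` with `Q` projective in `A`
splits in `B`, so `X` is a retract of `Q` and projective in `A`. Dually, an object injective in
`B` is a retract of its admissible `P`, which is projective, hence injective, in `A`. So
projectivity and injectivity in `B` are those of `A`, where they coincide. -/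

namespace Paper

variable {A : Type u} [Category.{v} A] [Preadditive A]

section Kernels

theorem IsKer.cancel {X Y Z : A} {i : X ⟶ Y} {d : Y ⟶ Z} (h : IsKer i d)
    {W : A} {a b : W ⟶ X} (hab : a ≫ i = b ≫ i) : a = b := by
  obtain ⟨_, -, huniq⟩ := h.2 (b ≫ i) (by rw [Category.assoc, h.1, comp_zero])
  rw [huniq a hab, huniq b rfl]

theorem IsCoker.cancel {X Y Z : A} {i : X ⟶ Y} {d : Y ⟶ Z} (h : IsCoker i d)
    {W : A} {a b : Z ⟶ W} (hab : d ≫ a = d ≫ b) : a = b := by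
  obtain ⟨_, -, huniq⟩ := h.2 (d ≫ b) (by rw [← Category.assoc, h.1, zero_comp])
  rw [huniq a hab, huniq b rfl]

theorem isKer_zero_id {Z : A} (hZ : IsZero Z) : IsKer (0 : Z ⟶ Z) (𝟙 Z) :=
  ⟨zero_comp, fun _ _ _ => ⟨0, hZ.eq_of_tgt _ _, fun _ _ => hZ.eq_of_tgt _ _⟩⟩

theorem IsKer.exists_isKer_of_isPullback {X Y Z Z' Y' : A} {i : X ⟶ Y} {d : Y ⟶ Z}
    (hk : IsKer i d) {d' : Y' ⟶ Z'} {f' : Y' ⟶ Y} {f : Z' ⟶ Z}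
    (pb : IsPullback d' f' f d) : ∃ u : X ⟶ Y', IsKer u d' := by
  refine ⟨pb.lift 0 i (by rw [zero_comp, hk.1]), pb.lift_fst _ _ _, fun W g hg => ?_⟩
  obtain ⟨h, hh, huniq⟩ := hk.2 (g ≫ f')
    (by rw [Category.assoc, ← pb.w, ← Category.assoc, hg, zero_comp])
  refine ⟨h, pb.hom_ext ?_ ?_, fun h' hh' => huniq h' ?_⟩
  · rw [Category.assoc, pb.lift_fst, comp_zero, hg]
  · rw [Category.assoc, pb.lift_snd, hh]
  · rw [← hh', Category.assoc, pb.lift_snd]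

theorem IsCoker.exists_isCoker_of_isPushout {X X' Y Y' Z : A} {i : X ⟶ Y} {d : Y ⟶ Z}
    (hk : IsCoker i d) {f : X ⟶ X'} {f' : Y ⟶ Y'} {i' : X' ⟶ Y'}
    (po : IsPushout i f f' i') : ∃ u : Y' ⟶ Z, IsCoker i' u := by
  refine ⟨po.desc d 0 (by rw [hk.1, comp_zero]), po.inr_desc _ _ _, fun W g hg => ?_⟩
  obtain ⟨h, hh, huniq⟩ := hk.2 (f' ≫ g)
    (by rw [← Category.assoc, po.w, Category.assoc, hg, comp_zero])
  refine ⟨h, po.hom_ext ?_ ?_, fun h' hh' => huniq h' ?_⟩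
  · rw [← Category.assoc, po.inl_desc, hh]
  · rw [← Category.assoc, po.inr_desc, zero_comp, hg]
  · rw [← hh', ← Category.assoc, po.inl_desc]

theorem IsKer.comp_of_isPullback {Y Z W X₂ Y' : A} {d : Y ⟶ Z} {e : Z ⟶ W}
    {i₂ : X₂ ⟶ Z} (hk₂ : IsKer i₂ e) {d' : Y' ⟶ X₂} {f' : Y' ⟶ Y}
    (pb : IsPullback d' f' i₂ d) : IsKer f' (d ≫ e) := by
  refine ⟨by rw [← Category.assoc, ← pb.w, Category.assoc, hk₂.1, comp_zero],
    fun _ g hg => ?_⟩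
  obtain ⟨h, hh, -⟩ := hk₂.2 (g ≫ d) (by rw [Category.assoc]; exact hg)
  refine ⟨pb.lift h g hh, pb.lift_snd _ _ _,
    fun l hl => pb.hom_ext ?_ (by rw [pb.lift_snd, hl])⟩
  exact hk₂.cancel (by rw [pb.lift_fst, Category.assoc, pb.w, ← Category.assoc, hl, hh])

theorem IsCoker.comp_of_isPushout {X Y W Z₁ Y' : A} {i : X ⟶ Y} {j : Y ⟶ W}
    {d₁ : Y ⟶ Z₁} (hk₁ : IsCoker i d₁) {i' : Z₁ ⟶ Y'} {f' : W ⟶ Y'}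
    (po : IsPushout j d₁ f' i') : IsCoker (i ≫ j) f' := by
  refine ⟨by rw [Category.assoc, po.w, ← Category.assoc, hk₁.1, zero_comp],
    fun _ g hg => ?_⟩
  obtain ⟨h, hh, -⟩ := hk₁.2 (j ≫ g) (by rw [← Category.assoc]; exact hg)
  refine ⟨po.desc g h hh.symm, po.inl_desc _ _ _,
    fun l hl => po.hom_ext (by rw [po.inl_desc, hl]) ?_⟩
  exact hk₁.cancel (by rw [po.inr_desc, ← Category.assoc, ← po.w, Category.assoc, hl, hh])

theorem IsKer.of_hom {P : ObjectProperty A} {X Y Z : P.FullSubcategory} {i : X ⟶ Y} {d : Y ⟶ Z}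
    (h : IsKer i.hom d.hom) : IsKer i d := by
  refine ⟨ObjectProperty.hom_ext _ h.1, fun _ g hg => ?_⟩
  obtain ⟨g', hg', huniq⟩ := h.2 g.hom (congrArg (·.hom) hg)
  exact ⟨ObjectProperty.homMk g', ObjectProperty.hom_ext _ hg',
    fun y hy => ObjectProperty.hom_ext _ (huniq y.hom (congrArg (·.hom) hy))⟩

theorem IsCoker.of_hom {P : ObjectProperty A} {X Y Z : P.FullSubcategory} {i : X ⟶ Y}
    {d : Y ⟶ Z} (h : IsCoker i.hom d.hom) : IsCoker i d := by
  refine ⟨ObjectProperty.hom_ext _ h.1, fun _ g hg => ?_⟩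
  obtain ⟨g', hg', huniq⟩ := h.2 g.hom (congrArg (·.hom) hg)
  exact ⟨ObjectProperty.homMk g', ObjectProperty.hom_ext _ hg',
    fun y hy => ObjectProperty.hom_ext _ (huniq y.hom (congrArg (·.hom) hy))⟩

end Kernels

namespace ExactStructure

variable (E : ExactStructure A)

theorem isConflation_of_isKer {X X' Y Z : A} {i : X ⟶ Y} {i' : X' ⟶ Y} {d : Y ⟶ Z}
    (hc : E.IsConflation i d) (hk : IsKer i' d) : E.IsConflation i' d := by
  have hk₀ := E.ker_of_conflation hc
  obtain ⟨u, hu, -⟩ := hk.2 i hk₀.1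
  obtain ⟨v, hv, -⟩ := hk₀.2 i' hk.1
  have huv : u ≫ v = 𝟙 X := hk₀.cancel (by rw [Category.assoc, hv, hu, Category.id_comp])
  have hvu : v ≫ u = 𝟙 X' := hk.cancel (by rw [Category.assoc, hu, hv, Category.id_comp])
  exact E.iso_closed ⟨u, v, huv, hvu⟩ (Iso.refl Y) (Iso.refl Z) (by simp [hu]) (by simp) hc

theorem isConflation_of_isCoker {X Y Z Z' : A} {i : X ⟶ Y} {d : Y ⟶ Z} {d' : Y ⟶ Z'}
    (hc : E.IsConflation i d) (hk : IsCoker i d') : E.IsConflation i d' := by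
  have hk₀ := E.coker_of_conflation hc
  obtain ⟨u, hu, -⟩ := hk₀.2 d' hk.1
  obtain ⟨v, hv, -⟩ := hk.2 d hk₀.1
  have huv : u ≫ v = 𝟙 Z := hk₀.cancel (by rw [← Category.assoc, hu, hv, Category.comp_id])
  have hvu : v ≫ u = 𝟙 Z' := hk.cancel (by rw [← Category.assoc, hv, hu, Category.comp_id])
  exact E.iso_closed (Iso.refl X) (Iso.refl Y) ⟨u, v, huv, hvu⟩ (by simp) (by simp [hu]) hc

theorem isConflation_zero_id {Z : A} (hZ : IsZero Z) : E.IsConflation (0 : Z ⟶ Z) (𝟙 Z) := by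
  obtain ⟨_, _, hc⟩ := E.ex0 hZ
  exact E.isConflation_of_isKer hc (isKer_zero_id hZ)

theorem exists_isConflation_of_isPullback {X Y Z Z' : A} {i : X ⟶ Y} {d : Y ⟶ Z}
    (hc : E.IsConflation i d) (f : Z' ⟶ Z) :
    ∃ (Y' : A) (d' : Y' ⟶ Z') (f' : Y' ⟶ Y) (u : X ⟶ Y'),
      IsPullback d' f' f d ∧ E.IsConflation u d' := by
  obtain ⟨Y', d', f', pb, _, _, hc'⟩ := E.ex2 d f ⟨X, i, hc⟩
  obtain ⟨u, hu⟩ := (E.ker_of_conflation hc).exists_isKer_of_isPullback pb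
  exact ⟨Y', d', f', u, pb, E.isConflation_of_isKer hc' hu⟩

theorem exists_isConflation_of_isPushout {X X' Y Z : A} {i : X ⟶ Y} {d : Y ⟶ Z}
    (hc : E.IsConflation i d) (f : X ⟶ X') :
    ∃ (Y' : A) (i' : X' ⟶ Y') (f' : Y ⟶ Y') (u : Y' ⟶ Z),
      IsPushout i f f' i' ∧ E.IsConflation i' u := by
  obtain ⟨Y', i', f', po, _, _, hc'⟩ := E.ex2op i f ⟨Z, d, hc⟩
  obtain ⟨u, hu⟩ := (E.coker_of_conflation hc).exists_isCoker_of_isPushout po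
  exact ⟨Y', i', f', u, po, E.isConflation_of_isCoker hc' hu⟩

theorem isConflation_comp_of_isPullback {X₁ X₂ Y Z W Y' : A} {i₁ : X₁ ⟶ Y} {d : Y ⟶ Z}
    {i₂ : X₂ ⟶ Z} {e : Z ⟶ W} (hc₁ : E.IsConflation i₁ d) (hc₂ : E.IsConflation i₂ e)
    {d' : Y' ⟶ X₂} {f' : Y' ⟶ Y} (pb : IsPullback d' f' i₂ d) :
    E.IsConflation f' (d ≫ e) := by
  obtain ⟨_, _, hc⟩ := E.ex1 ⟨X₁, i₁, hc₁⟩ ⟨X₂, i₂, hc₂⟩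
  exact E.isConflation_of_isKer hc ((E.ker_of_conflation hc₂).comp_of_isPullback pb)

theorem isConflation_comp_of_isPushout {X Y W Z₁ Z₂ Y' : A} {i : X ⟶ Y} {d₁ : Y ⟶ Z₁}
    {j : Y ⟶ W} {d₂ : W ⟶ Z₂} (hc₁ : E.IsConflation i d₁) (hc₂ : E.IsConflation j d₂)
    {i' : Z₁ ⟶ Y'} {f' : W ⟶ Y'} (po : IsPushout j d₁ f' i') :
    E.IsConflation (i ≫ j) f' := by
  obtain ⟨_, _, hc⟩ := E.ex1op ⟨Z₁, d₁, hc₁⟩ ⟨Z₂, d₂, hc₂⟩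
  exact E.isConflation_of_isCoker hc ((E.coker_of_conflation hc₁).comp_of_isPushout po)

variable {E}

theorem Proj.lift {Q Y Z : A} (hQ : E.Proj Q) {e : Y ⟶ Z} (he : E.IsDeflation e) (f : Q ⟶ Z) :
    ∃ h : Q ⟶ Y, h ≫ e = f := by
  obtain ⟨_, d', f', pb, hd'⟩ := E.ex2 e f he
  obtain ⟨s, hs⟩ := hQ d' hd'
  exact ⟨s ≫ f', by rw [Category.assoc, ← pb.w, ← Category.assoc, hs, Category.id_comp]⟩

theorem Inj.extend {I X Y : A} (hI : E.Inj I) {j : X ⟶ Y} (hj : E.IsInflation j) (f : X ⟶ I) :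
    ∃ h : Y ⟶ I, j ≫ h = f := by
  obtain ⟨_, i', f', po, hi'⟩ := E.ex2op j f hj
  obtain ⟨r, hr⟩ := hI i' hi'
  exact ⟨f' ≫ r, by rw [← Category.assoc, po.w, Category.assoc, hr, Category.comp_id]⟩

theorem Proj.of_retract {P Q : A} (hQ : E.Proj Q) (s : P ⟶ Q) (t : Q ⟶ P)
    (hst : s ≫ t = 𝟙 P) : E.Proj P := fun _ e he => by
  obtain ⟨h, hh⟩ := hQ.lift he t
  exact ⟨s ≫ h, by rw [Category.assoc, hh, hst]⟩

theorem Inj.of_retract {I J : A} (hJ : E.Inj J) (s : I ⟶ J) (t : J ⟶ I)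
    (hst : s ≫ t = 𝟙 I) : E.Inj I := fun _ j hj => by
  obtain ⟨h, hh⟩ := hJ.extend hj s
  exact ⟨h ≫ t, by rw [← Category.assoc, hh, hst]⟩

variable (E)

def IsExtensionClosed (B : Set A) : Prop :=
  ∀ ⦃X Y Z : A⦄ (i : X ⟶ Y) (d : Y ⟶ Z), E.IsConflation i d → X ∈ B → Z ∈ B → Y ∈ B

variable {E} {B : Set A}

def restrict (hB : E.IsExtensionClosed B) :
    ExactStructure (ObjectProperty.FullSubcategory (· ∈ B)) where
  IsConflation _ _ _ i d := E.IsConflation i.hom d.hom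
  ker_of_conflation _ _ _ _ _ h := IsKer.of_hom (E.ker_of_conflation h)
  coker_of_conflation _ _ _ _ _ h := IsCoker.of_hom (E.coker_of_conflation h)
  iso_closed _ _ _ _ _ _ _ _ _ _ eX eY eZ hi hd :=
    E.iso_closed ((ObjectProperty.ι _).mapIso eX) ((ObjectProperty.ι _).mapIso eY)
      ((ObjectProperty.ι _).mapIso eZ) (congrArg (·.hom) hi) (congrArg (·.hom) hd)
  ex0 Z hZ := ⟨Z, 0, E.isConflation_zero_id ((ObjectProperty.ι _).map_isZero hZ)⟩
  ex1 _ _ _ _ _ := by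
    rintro ⟨X₁, i₁, hc₁⟩ ⟨X₂, i₂, hc₂⟩
    obtain ⟨Y', d', f', u, pb, hc⟩ := E.exists_isConflation_of_isPullback hc₁ i₂.hom
    exact ⟨⟨Y', hB u d' hc X₁.property X₂.property⟩, ObjectProperty.homMk f',
      E.isConflation_comp_of_isPullback hc₁ hc₂ pb⟩
  ex1op _ _ _ _ _ := by
    rintro ⟨Z₁, d₁, hc₁⟩ ⟨Z₂, d₂, hc₂⟩
    obtain ⟨Y', i', f', u, po, hc⟩ := E.exists_isConflation_of_isPushout hc₂ d₁.hom
    exact ⟨⟨Y', hB i' u hc Z₁.property Z₂.property⟩, ObjectProperty.homMk f',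
      E.isConflation_comp_of_isPushout hc₁ hc₂ po⟩
  ex2 _ _ Z' _ f := by
    rintro ⟨X, i, hc⟩
    obtain ⟨Y', d', f', u, pb, hc'⟩ := E.exists_isConflation_of_isPullback hc f.hom
    have hY' : Y' ∈ B := hB u d' hc' X.property Z'.property
    exact ⟨⟨Y', hY'⟩, ObjectProperty.homMk d', ObjectProperty.homMk f',
      IsPullback.of_map_of_faithful (ObjectProperty.ι _) pb, X, ObjectProperty.homMk u, hc'⟩
  ex2op _ _ X' _ f := by
    rintro ⟨Z, d, hc⟩
    obtain ⟨Y', i', f', u, po, hc'⟩ := E.exists_isConflation_of_isPushout hc f.hom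
    have hY' : Y' ∈ B := hB i' u hc' X'.property Z.property
    exact ⟨⟨Y', hY'⟩, ObjectProperty.homMk i', ObjectProperty.homMk f',
      IsPushout.of_map_of_faithful (ObjectProperty.ι _) po, Z, ObjectProperty.homMk u, hc'⟩

variable {hB : E.IsExtensionClosed B} {X : ObjectProperty.FullSubcategory (· ∈ B)}

theorem restrict_proj_of_proj (hX : E.Proj X.obj) : (E.restrict hB).Proj X := by
  rintro Y d ⟨K, k, hc⟩
  obtain ⟨s, hs⟩ := hX d.hom ⟨K.obj, k.hom, hc⟩
  exact ⟨ObjectProperty.homMk s, ObjectProperty.hom_ext _ hs⟩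

theorem restrict_inj_of_inj (hX : E.Inj X.obj) : (E.restrict hB).Inj X := by
  rintro Y i ⟨C, c, hc⟩
  obtain ⟨r, hr⟩ := hX i.hom ⟨C.obj, c.hom, hc⟩
  exact ⟨ObjectProperty.homMk r, ObjectProperty.hom_ext _ hr⟩

theorem proj_of_restrict_proj (hX : (E.restrict hB).Proj X)
    {Q : ObjectProperty.FullSubcategory (· ∈ B)} (hQ : E.Proj Q.obj) {d : Q ⟶ X}
    (hd : (E.restrict hB).IsDeflation d) : E.Proj X.obj := by
  obtain ⟨s, hs⟩ := hX d hd
  exact hQ.of_retract s.hom d.hom (congrArg (·.hom) hs)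

theorem inj_of_restrict_inj (hX : (E.restrict hB).Inj X)
    {I : ObjectProperty.FullSubcategory (· ∈ B)} (hI : E.Inj I.obj) {i : X ⟶ I}
    (hi : (E.restrict hB).IsInflation i) : E.Inj X.obj := by
  obtain ⟨r, hr⟩ := hX i hi
  exact hI.of_retract i.hom r.hom (congrArg (·.hom) hr)

end ExactStructure

theorem admissible_subcategory_isFrobenius_general
    {A : Type u} [Category.{v} A] [Preadditive A]
    (E : ExactStructure A) (hE : E.IsFrobenius) (B : Set A)
    -- `B` is closed under extensions
    (hBext : ∀ ⦃X Y Z : A⦄ (i : X ⟶ Y) (d : Y ⟶ Z),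
      E.IsConflation i d → X ∈ B → Z ∈ B → Y ∈ B)
    -- `B` is admissible
    (hBadm : ∀ X ∈ B,
      (∃ (P X' : A) (i : X ⟶ P) (d : P ⟶ X'),
        E.IsConflation i d ∧ P ∈ B ∧ X' ∈ B ∧ E.Proj P) ∧
      (∃ (Q X'' : A) (i : X'' ⟶ Q) (d : Q ⟶ X),
        E.IsConflation i d ∧ Q ∈ B ∧ X'' ∈ B ∧ E.Proj Q)) :
    ∃ E' : ExactStructure (ObjectProperty.FullSubcategory (fun X : A => X ∈ B)),
      (∀ ⦃X Y Z : ObjectProperty.FullSubcategory (fun X : A => X ∈ B)⦄ (i : X ⟶ Y) (d : Y ⟶ Z),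
        E'.IsConflation i d ↔ E.IsConflation (X := X.obj) (Y := Y.obj) (Z := Z.obj) i.hom d.hom) ∧
      E'.IsFrobenius ∧
      (∀ X : ObjectProperty.FullSubcategory (fun X : A => X ∈ B), E'.Proj X ↔ E.Proj X.obj) := by
  let E' := E.restrict hBext
  have exists_proj_deflation : ∀ X : ObjectProperty.FullSubcategory (· ∈ B),
      ∃ (Q : ObjectProperty.FullSubcategory (· ∈ B)) (d : Q ⟶ X),
        E.Proj Q.obj ∧ E'.IsDeflation d := by
    intro X
    obtain ⟨-, Q, X'', i, d, hc, hQ, hX'', hQproj⟩ := hBadm X.obj X.property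
    exact ⟨⟨Q, hQ⟩, ObjectProperty.homMk d, hQproj, ⟨X'', hX''⟩, ObjectProperty.homMk i, hc⟩
  have exists_inj_inflation : ∀ X : ObjectProperty.FullSubcategory (· ∈ B),
      ∃ (P : ObjectProperty.FullSubcategory (· ∈ B)) (i : X ⟶ P),
        E.Inj P.obj ∧ E'.IsInflation i := by
    intro X
    obtain ⟨⟨P, X', i, d, hc, hP, hX', hPproj⟩, -⟩ := hBadm X.obj X.property
    exact ⟨⟨P, hP⟩, ObjectProperty.homMk i, (hE.proj_iff_inj P).mp hPproj,
      ⟨X', hX'⟩, ObjectProperty.homMk d, hc⟩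
  have proj_iff : ∀ X, E'.Proj X ↔ E.Proj X.obj := fun X =>
    let ⟨_, _, hQ, hd⟩ := exists_proj_deflation X
    ⟨fun hX => E.proj_of_restrict_proj hX hQ hd, E.restrict_proj_of_proj⟩
  have inj_iff : ∀ X, E'.Inj X ↔ E.Inj X.obj := fun X =>
    let ⟨_, _, hI, hi⟩ := exists_inj_inflation X
    ⟨fun hX => E.inj_of_restrict_inj hX hI hi, E.restrict_inj_of_inj⟩
  refine ⟨E', fun _ _ _ _ _ => Iff.rfl, ⟨fun X => ?_, fun X => ?_, fun X => ?_⟩, proj_iff⟩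
  · obtain ⟨Q, d, hQ, hd⟩ := exists_proj_deflation X
    exact ⟨Q, d, (proj_iff Q).mpr hQ, hd⟩
  · obtain ⟨P, i, hP, hi⟩ := exists_inj_inflation X
    exact ⟨P, i, (inj_iff P).mpr hP, hi⟩
  · rw [proj_iff, inj_iff, hE.proj_iff_inj]

/-- **Lemma (Section 2).** An admissible subcategory `B` of a Frobenius category `A`
(a full additive extension-closed subcategory such that every object of `B` fits into
conflations `B ⟶ P ⟶ B'` and `B'' ⟶ Q ⟶ B` in `B` with `P`, `Q` projective in `A`),
equipped with the inherited exact structure, is itself a Frobenius category; moreover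
an object of `B` is projective in `B` iff it is projective as an object of `A`. -/
theorem admissible_subcategory_isFrobenius
    {A : Type u} [Category.{v} A] [Preadditive A] [HasZeroObject A] [HasBinaryBiproducts A]
    (E : ExactStructure A) (hE : E.IsFrobenius) (B : Set A)
    -- `B` is an additive subcategory
    (hBzero : ∃ Z ∈ B, IsZero Z)
    (hBsum : ∀ X Y : A, X ∈ B → Y ∈ B → ∃ W ∈ B, Nonempty (W ≅ X ⊞ Y))
    -- `B` is closed under extensions
    (hBext : ∀ ⦃X Y Z : A⦄ (i : X ⟶ Y) (d : Y ⟶ Z),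
      E.IsConflation i d → X ∈ B → Z ∈ B → Y ∈ B)
    -- `B` is admissible
    (hBadm : ∀ X ∈ B,
      (∃ (P X' : A) (i : X ⟶ P) (d : P ⟶ X'),
        E.IsConflation i d ∧ P ∈ B ∧ X' ∈ B ∧ E.Proj P) ∧
      (∃ (Q X'' : A) (i : X'' ⟶ Q) (d : Q ⟶ X),
        E.IsConflation i d ∧ Q ∈ B ∧ X'' ∈ B ∧ E.Proj Q)) :
    ∃ E' : ExactStructure (ObjectProperty.FullSubcategory (fun X : A => X ∈ B)),
      (∀ ⦃X Y Z : ObjectProperty.FullSubcategory (fun X : A => X ∈ B)⦄ (i : X ⟶ Y) (d : Y ⟶ Z),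
        E'.IsConflation i d ↔ E.IsConflation (X := X.obj) (Y := Y.obj) (Z := Z.obj) i.hom d.hom) ∧
      E'.IsFrobenius ∧
      (∀ X : ObjectProperty.FullSubcategory (fun X : A => X ∈ B), E'.Proj X ↔ E.Proj X.obj) :=
  admissible_subcategory_isFrobenius_general E hE B hBext hBadm

end Paper
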